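/- arXiv:1903.09050 — 4 statements merged into one kernel-verified Lean document; each statement's English description precedes it below -/
import Mathlib

section
/- There exists a constant C depending only on d with the following property. Let q be a prime power with gcd(q, 2d) = 1 and let f(T) be a monic polynomial of degree d over F_q with f'' ≠ 0. Then for all but at most C values of s ∈ F_q, the polynomial f(T) + sT is a Morse polynomial. -/
open Polynomial
open scoped Classical

noncomputable section

/-- `f` is a Morse polynomial: its derivative has exactly `deg f - 1` distinct roots in the
algebraic closure, and the values of `f` at these roots are pairwise distinct. -/
def IsMorse {F : Type*} [Field F] (f : Polynomial F) : Prop :=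
  (Polynomial.roots (Polynomial.derivative
      (f.map (algebraMap F (AlgebraicClosure F))))).toFinset.card = f.natDegree - 1 ∧
  Set.InjOn (fun α => Polynomial.eval α (f.map (algebraMap F (AlgebraicClosure F))))
    ((Polynomial.roots (Polynomial.derivative
        (f.map (algebraMap F (AlgebraicClosure F))))).toFinset : Set (AlgebraicClosure F))

/-!
If `f + sT` is not Morse, then either `f' + s` has a double root `z`, so that `f''(z) = 0` and
`s = -f'(z)`, or `f' + s` has roots `x ≠ y` with `f(x) + sx = f(y) + sy`, so that `s = -f'(x)` and
`(x, y)` is a common zero of `G(x, y) = f(y) - f(x) - f'(x)(y - x)` and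
`H(x, y) = (f'(y) - f'(x)) / (y - x)`.

When `f'' ≠ 0` these two curves share no component. A common prime factor `P` divides
`∂G/∂y = (y - x) H`; if also `P ∣ ∂P/∂y` then `P` divides `∂((y - x) H)/∂y = f''(y)`, and
otherwise `P² ∣ G`, so that after swapping `x` and `y` the swapped factor divides
`∂G(y, x)/∂y = (y - x) f''(y)`. A prime factor of `H` divides neither `y - x` (as
`H(x, x) = f''(x)`) nor any `y - a` (as `f'` is not constant). Hence the resultant `Res_y(G, H)`
is a nonzero polynomial in `x` of degree at most `(2d - 2) d`, and every bad `s` is `-f'(z)` for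
a root `z` of `f'' · Res_y(G, H)`.
-/

open Polynomial.Bivariate

theorem Matrix.natDegree_det_le {R ι : Type*} [CommRing R] [Fintype ι] [DecidableEq ι]
    (M : Matrix ι ι R[X]) {D : ℕ} (hM : ∀ i j, (M i j).natDegree ≤ D) :
    M.det.natDegree ≤ Fintype.card ι * D := by
  rw [Matrix.det_apply]
  refine natDegree_sum_le_of_forall_le _ _ fun σ _ => ?_
  rw [Units.smul_def]
  refine (natDegree_smul_le _ _).trans <| (natDegree_prod_le _ _).trans ?_
  exact (Finset.sum_le_sum fun i _ => hM (σ i) i).trans (by simp)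

namespace Polynomial

theorem card_roots_toFinset_eq_natDegree_iff {K : Type*} [Field K] [IsAlgClosed K] {p : K[X]}
    (hp : p ≠ 0) :
    p.roots.toFinset.card = p.natDegree ↔ ∀ z, p.IsRoot z → ¬ (derivative p).IsRoot z := by
  rw [← IsAlgClosed.card_roots_eq_natDegree, Multiset.toFinset_card_eq_card_iff_nodup,
    Multiset.nodup_iff_count_le_one]
  refine forall_congr' fun z => ?_
  rw [count_roots, ← not_lt, one_lt_rootMultiplicity_iff_isRoot hp]
  tauto

theorem natDegree_derivative_of_natCast_ne_zero {K : Type*} [Field K] {F : K[X]}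
    (hd : (F.natDegree : K) ≠ 0) :
    (derivative F).natDegree = F.natDegree - 1 := by
  have hF : F.natDegree ≠ 0 := by rintro h; simp [h] at hd
  have hcast : ((F.natDegree - 1 : ℕ) : K) + 1 = F.natDegree := by
    rw [Nat.cast_sub (Nat.one_le_iff_ne_zero.2 hF), Nat.cast_one, sub_add_cancel]
  refine natDegree_eq_of_le_of_coeff_ne_zero (natDegree_derivative_le F) ?_
  rw [coeff_derivative, Nat.sub_add_cancel (Nat.one_le_iff_ne_zero.2 hF), hcast]
  exact mul_ne_zero (leadingCoeff_ne_zero.2 (by rintro rfl; simp at hF)) hd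

section Resultant

variable {R : Type*} [CommRing R]

theorem resultant_eq_zero_of_isRoot {f g : R[X]} {m n : ℕ}
    (hf : f.natDegree ≤ m) (hg : g.natDegree ≤ n) (hmn : m ≠ 0 ∨ n ≠ 0) {x : R}
    (hfx : f.IsRoot x) (hgx : g.IsRoot x) : resultant f g m n = 0 := by
  obtain ⟨p, q, -, -, h⟩ := exists_mul_add_mul_eq_C_resultant f g hf hg hmn
  simpa [hfx.eq_zero, hgx.eq_zero] using congrArg (eval x) h.symm

theorem exists_mul_add_mul_eq_zero_of_resultant_eq_zero [IsDomain R]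
    {f g : R[X]} {m n : ℕ} (hf : f.natDegree ≤ m) (hg : g.natDegree ≤ n)
    (h : resultant f g m n = 0) :
    ∃ p q : R[X], (p ≠ 0 ∨ q ≠ 0) ∧ p.degree < m ∧ q.degree < n ∧ f * q + g * p = 0 := by
  let b := ((degreeLT.basis R m).prod (degreeLT.basis R n)).reindex finSumFinEquiv
  obtain ⟨v, hv0, hv⟩ := Matrix.exists_mulVec_eq_zero_iff.2 h
  rw [← toMatrix_sylvesterMap' f g hf hg] at hv
  let w := b.equivFun.symm v
  have hw : sylvesterMap f g hf hg w = 0 := by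
    have := LinearMap.toMatrix_mulVec_repr b (degreeLT.basis R (m + n))
      (sylvesterMap f g hf hg) w
    rw [← b.equivFun_apply, LinearEquiv.apply_symm_apply, hv] at this
    exact (degreeLT.basis R (m + n)).repr.injective (by ext i; exact (congrFun this i).symm)
  refine ⟨w.1, w.2, ?_, mem_degreeLT.1 w.1.2, mem_degreeLT.1 w.2.2, congrArg Subtype.val hw⟩
  by_contra! h0
  exact hv0 (b.equivFun.symm.map_eq_zero_iff.1 (Prod.ext (Subtype.ext h0.1) (Subtype.ext h0.2)))

theorem resultant_ne_zero_of_isRelPrime [IsDomain R] [UniqueFactorizationMonoid R]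
    {f g : R[X]} {m n : ℕ} (hf0 : f ≠ 0) (hf : f.natDegree = m) (hg : g.natDegree ≤ n)
    (hfg : IsRelPrime f g) :
    resultant f g m n ≠ 0 := by
  intro h
  obtain ⟨p, q, hpq, hp, -, hfgpq⟩ := exists_mul_add_mul_eq_zero_of_resultant_eq_zero hf.le hg h
  have hp0 : p = 0 := by
    by_contra hp0
    have hfp : f ∣ p := hfg.dvd_of_dvd_mul_left ⟨-q, by linear_combination hfgpq⟩
    have := (degree_le_of_dvd hfp hp0).trans_lt hp
    rw [degree_eq_natDegree hf0, hf] at this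
    exact lt_irrefl _ this
  have hq0 : q = 0 := by simpa [hp0, hf0] using hfgpq
  exact hpq.elim (· hp0) (· hq0)

theorem natDegree_resultant_le (f g : R[X][Y]) (m n : ℕ) {D : ℕ}
    (hf : ∀ i, (f.coeff i).natDegree ≤ D) (hg : ∀ i, (g.coeff i).natDegree ≤ D) :
    (resultant f g m n).natDegree ≤ (m + n) * D := by
  simpa [resultant] using Matrix.natDegree_det_le (sylvester f g m n) fun i j => by
    induction j using Fin.addCases <;>
      simp only [sylvester, Matrix.of_apply, Fin.addCases_left, Fin.addCases_right] <;>
      split_ifs <;> simp [hf, hg]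

end Resultant

namespace Bivariate

theorem coeff_coeff_swap {R : Type*} [CommSemiring R] (p : R[X][Y]) (i j : ℕ) :
    ((swap p).coeff i).coeff j = (p.coeff j).coeff i := by
  induction p using Polynomial.induction_on' with
  | add p q hp hq => simp [hp, hq]
  | monomial n a =>
    induction a using Polynomial.induction_on' with
    | add a b ha hb => simp_all [(monomial n).map_add]
    | monomial m r =>
      rw [swap_monomial_monomial]
      simp only [coeff_monomial]
      split_ifs <;> simp_all [coeff_monomial]

theorem natDegree_coeff_le_natDegree_swap {R : Type*} [CommSemiring R] (p : R[X][Y]) (i : ℕ) :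
    (p.coeff i).natDegree ≤ (swap p).natDegree :=
  natDegree_le_iff_coeff_eq_zero.2 fun j hj => by
    rw [← coeff_coeff_swap, coeff_eq_zero_of_natDegree_lt hj, coeff_zero]

end Bivariate

theorem exists_associated_X_sub_C_C_of_prime_dvd_map_C {K : Type*} [Field K] [IsAlgClosed K]
    {Q : K[X][Y]} (hQ : Prime Q) {p : K[X]} (hp : p ≠ 0) (hQp : Q ∣ p.map C) :
    ∃ a : K, Associated Q (Y - C (C a)) := by
  have hsplit : p.map C = C (C p.leadingCoeff) * (p.roots.map fun a => Y - C (C a)).prod := by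
    conv_lhs => rw [(IsAlgClosed.splits p).eq_prod_roots]
    simp [Polynomial.map_multiset_prod, Multiset.map_map]
  rw [hsplit] at hQp
  rcases hQ.dvd_or_dvd hQp with h | h
  · exact absurd (isUnit_of_dvd_unit h (by simpa using hp)) hQ.not_isUnit
  · obtain ⟨a, -, ha⟩ := hQ.exists_mem_multiset_map_dvd h
    exact ⟨a, hQ.associated_of_dvd (prime_X_sub_C _) ha⟩

section TangentGap

variable {K : Type*} [Field K] (F : K[X])

/- In `K[X][Y]` the inner variable `x = C X` and the outer one `y = Y` give
`tangentGap F = F(y) - F(x) - F'(x)(y - x)` and `derivDivDiff F = (F'(y) - F'(x)) / (y - x)`. -/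

def tangentGap : K[X][Y] :=
  F.map C - C F - C (derivative F) * (Y - C X)

def derivDivDiff : K[X][Y] :=
  ((derivative F).map C - C (derivative F)) /ₘ (Y - C X)

theorem X_sub_C_X_mul_derivDivDiff :
    (Y - C X) * derivDivDiff F = (derivative F).map C - C (derivative F) :=
  mul_divByMonic_eq_iff_isRoot.2 (by simp [eval_map])

theorem derivative_tangentGap : derivative (tangentGap F) = (Y - C X) * derivDivDiff F := by
  rw [X_sub_C_X_mul_derivDivDiff, tangentGap]
  simp [derivative_map]

theorem derivative_swap_tangentGap :
    derivative (swap (tangentGap F)) = (Y - C X) * (derivative (derivative F)).map C := by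
  simp only [tangentGap, map_sub, map_mul, swap_map_C, swap_C, swap_Y, map_X, derivative_C,
    derivative_map, derivative_mul, derivative_X]
  ring

theorem eval_X_derivDivDiff : eval X (derivDivDiff F) = derivative (derivative F) := by
  have h := congrArg derivative (X_sub_C_X_mul_derivDivDiff F)
  rw [derivative_mul] at h
  simpa [derivative_map, eval_map] using congrArg (eval X) h

theorem swap_derivDivDiff : swap (derivDivDiff F) = derivDivDiff F := by
  have h := congrArg swap (X_sub_C_X_mul_derivDivDiff F)
  simp only [map_mul, map_sub, swap_Y, swap_C, swap_map_C, Polynomial.map_X] at h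
  refine mul_left_cancel₀ (X_sub_C_ne_zero (X : K[X])) ?_
  rw [X_sub_C_X_mul_derivDivDiff]
  linear_combination -h

theorem natDegree_tangentGap (hF : 2 ≤ F.natDegree) : (tangentGap F).natDegree = F.natDegree := by
  have hlow : (C F + C (derivative F) * (Y - C X)).natDegree ≤ 1 :=
    (natDegree_add_le _ _).trans (max_le (by simp) (natDegree_C_mul_le _ _ |>.trans (by simp)))
  have hmap : (F.map C).natDegree = F.natDegree := natDegree_map_eq_of_injective C_injective F
  rw [tangentGap, sub_sub, natDegree_sub_eq_left_of_natDegree_lt (by omega), hmap]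

theorem tangentGap_ne_zero (hF : 2 ≤ F.natDegree) : tangentGap F ≠ 0 := by
  intro h
  have := natDegree_tangentGap F hF
  rw [h, natDegree_zero] at this
  omega

theorem natDegree_swap_tangentGap_le (hF : 1 ≤ F.natDegree) :
    (swap (tangentGap F)).natDegree ≤ F.natDegree := by
  have h : swap (tangentGap F) = C F - F.map C + (derivative F).map C * (Y - C X) := by
    simp only [tangentGap, map_sub, swap_map_C, swap_C, map_mul, swap_Y, map_X]
    ring
  rw [h]
  refine (natDegree_add_le _ _).trans (max_le ((natDegree_sub_le _ _).trans (max_le ?_ ?_)) ?_)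
  · simp
  · exact natDegree_map_le
  · have := (natDegree_map_le (f := C) (p := derivative F)).trans (natDegree_derivative_le F)
    refine natDegree_mul_le.trans ?_
    rw [natDegree_X_sub_C]
    omega

theorem natDegree_derivDivDiff_le : (derivDivDiff F).natDegree ≤ F.natDegree - 2 := by
  rw [derivDivDiff, natDegree_divByMonic _ (monic_X_sub_C _), natDegree_X_sub_C]
  refine Nat.sub_le_sub_right ((natDegree_sub_le _ _).trans (max_le ?_ ?_)) 1
  · exact natDegree_map_le.trans (natDegree_derivative_le F)
  · simp

theorem evalEval_tangentGap (x y : K) :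
    (tangentGap F).evalEval x y = F.eval y - F.eval x - (derivative F).eval x * (y - x) := by
  simp [tangentGap, evalEval_C, evalEval_map_C]

theorem evalEval_derivDivDiff_eq_zero {x y : K} (hxy : x ≠ y)
    (h : (derivative F).eval x = (derivative F).eval y) : (derivDivDiff F).evalEval x y = 0 := by
  have := congrArg (evalEval x y) (X_sub_C_X_mul_derivDivDiff F)
  simp only [evalEval_mul, evalEval_sub, evalEval_X, evalEval_C, evalEval_map_C, eval_X, h,
    sub_self] at this
  exact (mul_eq_zero.1 this).resolve_left (sub_ne_zero.2 hxy.symm)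

variable {F}

theorem not_dvd_X_sub_C_X_of_dvd_derivDivDiff (hF : derivative (derivative F) ≠ 0)
    {Q : K[X][Y]} (hQ : Prime Q) (hQH : Q ∣ derivDivDiff F) : ¬ Q ∣ Y - C X := fun h => by
  have hroot : (derivDivDiff F).IsRoot X :=
    dvd_iff_isRoot.1 ((hQ.associated_of_dvd (prime_X_sub_C _) h).symm.dvd.trans hQH)
  exact hF (by rw [← eval_X_derivDivDiff, hroot.eq_zero])

theorem not_dvd_map_C_of_dvd_derivDivDiff [IsAlgClosed K] (hF : derivative (derivative F) ≠ 0)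
    {Q : K[X][Y]} (hQ : Prime Q) (hQH : Q ∣ derivDivDiff F) :
    ¬ Q ∣ (derivative (derivative F)).map C := fun h => by
  obtain ⟨a, ha⟩ := exists_associated_X_sub_C_C_of_prime_dvd_map_C hQ hF h
  have hroot : ((derivative F).map C - C (derivative F)).IsRoot (C a) := by
    rw [← dvd_iff_isRoot, ← X_sub_C_X_mul_derivDivDiff]
    exact (ha.symm.dvd.trans hQH).mul_left _
  have hconst : C ((derivative F).eval a) = derivative F := by
    simpa [IsRoot, eval_map, sub_eq_zero] using hroot
  exact hF (by rw [← hconst, derivative_C])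

theorem isRelPrime_tangentGap_derivDivDiff [IsAlgClosed K] (hF2 : 2 ≤ F.natDegree)
    (hF : derivative (derivative F) ≠ 0) : IsRelPrime (tangentGap F) (derivDivDiff F) := by
  rw [UniqueFactorizationMonoid.isRelPrime_iff_no_prime_factors (tangentGap_ne_zero F hF2)]
  intro P hPG hPH hP
  by_cases hPP : P ∣ derivative P
  · refine not_dvd_map_C_of_dvd_derivDivDiff hF hP hPH ?_
    have hPH' : P ∣ derivative (derivDivDiff F) := by
      obtain ⟨V, hV⟩ := hPH
      rw [hV, derivative_mul]
      exact dvd_add (hPP.mul_right V) (dvd_mul_right _ _)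
    have h : derivative ((Y - C X) * derivDivDiff F) = (derivative (derivative F)).map C := by
      simp [X_sub_C_X_mul_derivDivDiff, derivative_map]
    rw [← h, derivative_mul, derivative_X_sub_C, one_mul]
    exact dvd_add hPH (hPH'.mul_left _)
  · obtain ⟨W, hW⟩ := hPG
    have hPW : P ∣ W := by
      have hPG' : P ∣ derivative (tangentGap F) := derivative_tangentGap F ▸ hPH.mul_left _
      rw [hW, derivative_mul] at hPG'
      exact (hP.dvd_or_dvd ((dvd_add_left (dvd_mul_right _ _)).1 hPG')).resolve_left hPP
    have hsq : swap P ^ 2 ∣ swap (tangentGap F) := by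
      rw [hW, sq, map_mul]
      exact mul_dvd_mul_left _ (_root_.map_dvd swap hPW)
    have hQ : Prime (swap P) := (MulEquiv.prime_iff swap).2 hP
    have hQH : swap P ∣ derivDivDiff F := swap_derivDivDiff F ▸ _root_.map_dvd swap hPH
    have hQ' := pow_sub_one_dvd_derivative_of_pow_dvd hsq
    rw [derivative_swap_tangentGap, pow_one] at hQ'
    rcases hQ.dvd_or_dvd hQ' with h | h
    · exact not_dvd_X_sub_C_X_of_dvd_derivDivDiff hF hQ hQH h
    · exact not_dvd_map_C_of_dvd_derivDivDiff hF hQ hQH h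

end TangentGap

section TangentResultant

variable {K : Type*} [Field K] (F : K[X])

def tangentResultant : K[X] :=
  resultant (tangentGap F) (derivDivDiff F) F.natDegree (F.natDegree - 2)

theorem tangentResultant_ne_zero [IsAlgClosed K] (hF2 : 2 ≤ F.natDegree)
    (hF : derivative (derivative F) ≠ 0) : tangentResultant F ≠ 0 :=
  resultant_ne_zero_of_isRelPrime (tangentGap_ne_zero F hF2) (natDegree_tangentGap F hF2)
    (natDegree_derivDivDiff_le F) (isRelPrime_tangentGap_derivDivDiff hF2 hF)

theorem natDegree_tangentResultant_le (hF : 1 ≤ F.natDegree) :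
    (tangentResultant F).natDegree ≤ (F.natDegree + (F.natDegree - 2)) * F.natDegree := by
  refine natDegree_resultant_le _ _ _ _ (fun i => ?_) (fun i => ?_)
  · exact (natDegree_coeff_le_natDegree_swap _ i).trans (natDegree_swap_tangentGap_le F hF)
  · refine (natDegree_coeff_le_natDegree_swap _ i).trans ?_
    rw [swap_derivDivDiff]
    exact (natDegree_derivDivDiff_le F).trans (Nat.sub_le _ _)

theorem tangentResultant_eval_eq_zero (hF2 : 2 ≤ F.natDegree) {x y : K}
    (hG : (tangentGap F).evalEval x y = 0) (hH : (derivDivDiff F).evalEval x y = 0) :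
    (tangentResultant F).eval x = 0 := by
  rw [tangentResultant, ← coe_evalRingHom, ← resultant_map_map]
  refine resultant_eq_zero_of_isRoot (natDegree_map_le.trans (natDegree_tangentGap F hF2).le)
    (natDegree_map_le.trans (natDegree_derivDivDiff_le F)) (Or.inl (by omega)) (x := y) ?_ ?_
  · rwa [IsRoot, map_evalRingHom_eval]
  · rwa [IsRoot, map_evalRingHom_eval]

def morseObstruction : K[X] :=
  derivative (derivative F) * tangentResultant F

theorem morseObstruction_ne_zero [IsAlgClosed K] (hF2 : 2 ≤ F.natDegree)
    (hF : derivative (derivative F) ≠ 0) : morseObstruction F ≠ 0 :=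
  mul_ne_zero hF (tangentResultant_ne_zero F hF2 hF)

theorem natDegree_morseObstruction_le (hF : 1 ≤ F.natDegree) :
    (morseObstruction F).natDegree ≤
      F.natDegree - 2 + (F.natDegree + (F.natDegree - 2)) * F.natDegree :=
  natDegree_mul_le.trans
    (add_le_add (natDegree_iterate_derivative F 2) (natDegree_tangentResultant_le F hF))

end TangentResultant

section Morse

variable {K : Type*} [Field K] {F : K[X]}

theorem exists_eq_neg_eval_of_not_injOn (hF2 : 2 ≤ F.natDegree) {t : K}
    (h : ¬ Set.InjOn (fun α => eval α (F + C t * X))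
      ((derivative (F + C t * X)).roots.toFinset : Set K)) :
    ∃ z, (tangentResultant F).IsRoot z ∧ t = -(derivative F).eval z := by
  simp only [Set.InjOn, Finset.mem_coe, Multiset.mem_toFinset, mem_roots', derivative_add,
    derivative_C_mul_X, IsRoot, eval_add, eval_C, eval_mul, eval_X] at h
  push Not at h
  obtain ⟨x, ⟨-, hx⟩, y, ⟨-, hy⟩, hxy, hne⟩ := h
  have hG : (tangentGap F).evalEval x y = 0 := by
    rw [evalEval_tangentGap]
    linear_combination -hxy - (y - x) * hx
  have hH := evalEval_derivDivDiff_eq_zero F hne (by linear_combination hx - hy)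
  exact ⟨x, tangentResultant_eval_eq_zero F hF2 hG hH, by linear_combination hx⟩

variable [IsAlgClosed K]

theorem exists_eq_neg_eval_of_card_roots_ne (hF2 : 2 ≤ F.natDegree)
    (hd : (F.natDegree : K) ≠ 0) {t : K}
    (h : (derivative (F + C t * X)).roots.toFinset.card ≠ F.natDegree - 1) :
    ∃ z, (derivative (derivative F)).IsRoot z ∧ t = -(derivative F).eval z := by
  have hdeg : (derivative F + C t).natDegree = F.natDegree - 1 := by
    rw [natDegree_add_C, natDegree_derivative_of_natCast_ne_zero hd]
  have hne : derivative F + C t ≠ 0 := by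
    rintro h0
    rw [h0, natDegree_zero] at hdeg
    omega
  rw [derivative_add, derivative_C_mul_X, ← hdeg, Ne, card_roots_toFinset_eq_natDegree_iff hne]
    at h
  push Not at h
  obtain ⟨z, hz, hz'⟩ := h
  refine ⟨z, by simpa using hz', ?_⟩
  simp only [IsRoot, eval_add, eval_C] at hz
  linear_combination hz

end Morse

end Polynomial

theorem FiniteField.natCast_ne_zero_of_coprime_card {F : Type*} [Field F] [Fintype F] {n : ℕ}
    (h : Nat.Coprime (Fintype.card F) n) : (n : F) ≠ 0 := fun hn =>
  CharP.ringChar_ne_one <|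
    (h.coprime_dvd_left ((ringChar.spec F _).1 (FiniteField.cast_card_eq_zero F))).eq_one_of_dvd
      ((ringChar.spec F n).1 hn)

theorem exists_isRoot_morseObstruction_of_not_isMorse {k : Type*} [Field k] {f : k[X]}
    (hf2 : 2 ≤ f.natDegree) (hd : (f.natDegree : k) ≠ 0) {s : k}
    (hs : ¬ IsMorse (f + C s * X)) :
    ∃ z, (morseObstruction (f.map (algebraMap k (AlgebraicClosure k)))).IsRoot z ∧
      algebraMap k (AlgebraicClosure k) s =
        -(derivative (f.map (algebraMap k (AlgebraicClosure k)))).eval z := by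
  set φ := algebraMap k (AlgebraicClosure k)
  set F := f.map φ
  have hFdeg : F.natDegree = f.natDegree := natDegree_map φ
  have hmap : (f + C s * X).map φ = F + C (φ s) * X := by simp [F]
  have hdeg : (f + C s * X).natDegree = F.natDegree := by
    rw [hFdeg, natDegree_add_eq_left_of_natDegree_lt]
    exact (natDegree_C_mul_le s X).trans_lt (by rw [natDegree_X]; omega)
  rw [IsMorse, hmap, hdeg, not_and_or] at hs
  rcases hs with hs | hs
  · have hFd : (F.natDegree : AlgebraicClosure k) ≠ 0 := by
      rwa [hFdeg, ← map_natCast φ, _root_.map_ne_zero]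
    obtain ⟨z, hz, hzs⟩ := exists_eq_neg_eval_of_card_roots_ne (hFdeg ▸ hf2) hFd hs
    exact ⟨z, by simp [morseObstruction, hz.eq_zero], hzs⟩
  · obtain ⟨z, hz, hzs⟩ := exists_eq_neg_eval_of_not_injOn (hFdeg ▸ hf2) hs
    exact ⟨z, by simp [morseObstruction, hz.eq_zero], hzs⟩

theorem card_not_isMorse_add_C_mul_X_le {k : Type*} [Field k] {f : k[X]}
    (hd : (f.natDegree : k) ≠ 0) (hf : derivative (derivative f) ≠ 0) :
    Nat.card {s : k // ¬ IsMorse (f + C s * X)} ≤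
      f.natDegree - 2 + (f.natDegree + (f.natDegree - 2)) * f.natDegree := by
  set φ := algebraMap k (AlgebraicClosure k)
  set F := f.map φ
  have hf2 : 2 ≤ f.natDegree := by
    by_contra! h
    exact hf (iterate_derivative_eq_zero (x := 2) h)
  have hFdeg : F.natDegree = f.natDegree := natDegree_map φ
  have hF : derivative (derivative F) ≠ 0 := by
    rwa [derivative_map, derivative_map, Ne, Polynomial.map_eq_zero_iff φ.injective]
  have hE := morseObstruction_ne_zero F (hFdeg ▸ hf2) hF
  set T := (morseObstruction F).roots.toFinset.image fun z => -(derivative F).eval z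
  calc Nat.card {s : k // ¬ IsMorse (f + C s * X)}
      = {s : k | ¬ IsMorse (f + C s * X)}.ncard := Nat.card_coe_set_eq _
    _ ≤ (T : Set (AlgebraicClosure k)).ncard := by
      refine Set.ncard_le_ncard_of_injOn φ (fun s hs => ?_) φ.injective.injOn
      obtain ⟨z, hz, hzs⟩ := exists_isRoot_morseObstruction_of_not_isMorse hf2 hd hs
      exact Finset.mem_image.2 ⟨z, Multiset.mem_toFinset.2 ((mem_roots hE).2 hz), hzs.symm⟩
    _ = T.card := Set.ncard_coe_finset T
    _ ≤ (morseObstruction F).roots.card :=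
      Finset.card_image_le.trans (Multiset.toFinset_card_le _)
    _ ≤ (morseObstruction F).natDegree := card_roots' _
    _ ≤ _ := hFdeg ▸ natDegree_morseObstruction_le F (by omega)

theorem stmt4 (d : ℕ) :
    ∃ C : ℕ, ∀ (Fq : Type) [Field Fq] [Fintype Fq],
      Nat.Coprime (Fintype.card Fq) (2 * d) →
      ∀ f : Polynomial Fq, f.Monic → f.natDegree = d →
        Polynomial.derivative (Polynomial.derivative f) ≠ 0 →
        Nat.card {s : Fq // ¬ IsMorse (f + Polynomial.C s * Polynomial.X)} ≤ C := by
  refine ⟨d - 2 + (d + (d - 2)) * d, fun Fq _ _ hq f _ hfd hf => ?_⟩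
  subst hfd
  exact card_not_isMorse_add_C_mul_X_le
    (FiniteField.natCast_ne_zero_of_coprime_card hq.coprime_mul_left_right) hf
end
end

section
/- Let f(T) be a monic polynomial of degree d over F_q, let s, b ∈ \bar{F_q}, and suppose α ≠ β in \bar{F_q} are both roots of multiplicity at least 2 of the polynomial f(T) + sT + b. Then f̃(α, β) = f'(α) and \widetilde{f'}(α, β) = 0; that is, the point (α, β) lies on both of the plane curves defined by f̃(x,y) − f'(x) = 0 and \widetilde{f'}(x,y) = 0. -/
/-!
At a root `γ` of multiplicity at least two of `f + sT + b`, both this polynomial and its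
derivative vanish, so `f(γ) = -sγ - b` and `f'(γ) = -s`. Evaluating the defining identities
`(x - y) f̃ = f(x) - f(y)` and `(x - y) f̃' = f'(x) - f'(y)` at `(α, β)` and dividing by
`α - β ≠ 0` gives `f̃(α, β) = -s = f'(α)` and `f̃'(α, β) = 0`.
-/

open Polynomial

theorem MvPolynomial.aeval_eq_div_sub_of_X_sub_X_mul_eq {R K : Type*} [CommRing R] [Field K]
    [Algebra R K] (p : R[X]) (q : MvPolynomial (Fin 2) R)
    (hq : (MvPolynomial.X 0 - MvPolynomial.X 1) * q =
      Polynomial.aeval (MvPolynomial.X 0) p - Polynomial.aeval (MvPolynomial.X 1) p)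
    {α β : K} (hne : α ≠ β) :
    MvPolynomial.aeval ![α, β] q = (Polynomial.aeval α p - Polynomial.aeval β p) / (α - β) := by
  have hαβ := congrArg (MvPolynomial.aeval ![α, β]) hq
  simp only [map_sub, map_mul, MvPolynomial.aeval_X, ← aeval_algHom_apply,
    Matrix.cons_val_zero, Matrix.cons_val_one] at hαβ
  rw [← hαβ, mul_div_cancel_left₀ _ (sub_ne_zero.mpr hne)]

theorem Polynomial.aeval_eq_and_aeval_derivative_eq_of_one_lt_rootMultiplicity
    {K L : Type*} [CommRing K] [CommRing L] [Algebra K L] (f : K[X]) {s b γ : L}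
    (hγ : 1 < rootMultiplicity γ (f.map (algebraMap K L) + C s * X + C b)) :
    aeval γ f = -(s * γ) - b ∧ aeval γ (derivative f) = -s := by
  have hroot := isRoot_iterate_derivative_of_lt_rootMultiplicity (zero_lt_one.trans hγ)
  have hroot' := isRoot_iterate_derivative_of_lt_rootMultiplicity hγ
  simp only [Function.iterate_zero, id_eq, Function.iterate_one, IsRoot.def, eval_add, eval_mul,
    eval_C, eval_X, eval_map_algebraMap, derivative_add, derivative_map, derivative_mul,
    derivative_C, derivative_X, zero_mul, mul_one, zero_add, add_zero] at hroot hroot'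
  exact ⟨by linear_combination hroot, by linear_combination hroot'⟩

theorem stmt13_general (Fq : Type) [Field Fq] (f : Polynomial Fq)
    (ft ftd : MvPolynomial (Fin 2) Fq)
    (hft : (MvPolynomial.X 0 - MvPolynomial.X 1) * ft =
      Polynomial.aeval (MvPolynomial.X 0) f - Polynomial.aeval (MvPolynomial.X 1) f)
    (hftd : (MvPolynomial.X 0 - MvPolynomial.X 1) * ftd =
      Polynomial.aeval (MvPolynomial.X 0) (Polynomial.derivative f) -
        Polynomial.aeval (MvPolynomial.X 1) (Polynomial.derivative f))
    (s b α β : AlgebraicClosure Fq) (hne : α ≠ β)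
    (hα : 2 ≤ Polynomial.rootMultiplicity α
        (f.map (algebraMap Fq (AlgebraicClosure Fq)) + Polynomial.C s * Polynomial.X +
          Polynomial.C b))
    (hβ : 2 ≤ Polynomial.rootMultiplicity β
        (f.map (algebraMap Fq (AlgebraicClosure Fq)) + Polynomial.C s * Polynomial.X +
          Polynomial.C b)) :
    MvPolynomial.aeval ![α, β] ft = Polynomial.aeval α (Polynomial.derivative f) ∧
    MvPolynomial.aeval ![α, β] ftd = 0 := by
  obtain ⟨hfα, hf'α⟩ := aeval_eq_and_aeval_derivative_eq_of_one_lt_rootMultiplicity f hα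
  obtain ⟨hfβ, hf'β⟩ := aeval_eq_and_aeval_derivative_eq_of_one_lt_rootMultiplicity f hβ
  rw [MvPolynomial.aeval_eq_div_sub_of_X_sub_X_mul_eq f ft hft hne,
    MvPolynomial.aeval_eq_div_sub_of_X_sub_X_mul_eq _ ftd hftd hne, hfα, hfβ, hf'α, hf'β,
    sub_self, zero_div]
  refine ⟨?_, rfl⟩
  rw [div_eq_iff (sub_ne_zero.mpr hne)]
  ring

theorem stmt13 (Fq : Type) [Field Fq] [Fintype Fq] (d : ℕ) (f : Polynomial Fq)
    (hmonic : f.Monic) (hdeg : f.natDegree = d)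
    (ft ftd : MvPolynomial (Fin 2) Fq)
    (hft : (MvPolynomial.X 0 - MvPolynomial.X 1) * ft =
      Polynomial.aeval (MvPolynomial.X 0) f - Polynomial.aeval (MvPolynomial.X 1) f)
    (hftd : (MvPolynomial.X 0 - MvPolynomial.X 1) * ftd =
      Polynomial.aeval (MvPolynomial.X 0) (Polynomial.derivative f) -
        Polynomial.aeval (MvPolynomial.X 1) (Polynomial.derivative f))
    (s b α β : AlgebraicClosure Fq) (hne : α ≠ β)
    (hα : 2 ≤ Polynomial.rootMultiplicity α
        (f.map (algebraMap Fq (AlgebraicClosure Fq)) + Polynomial.C s * Polynomial.X +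
          Polynomial.C b))
    (hβ : 2 ≤ Polynomial.rootMultiplicity β
        (f.map (algebraMap Fq (AlgebraicClosure Fq)) + Polynomial.C s * Polynomial.X +
          Polynomial.C b)) :
    MvPolynomial.aeval ![α, β] ft = Polynomial.aeval α (Polynomial.derivative f) ∧
    MvPolynomial.aeval ![α, β] ftd = 0 :=
  stmt13_general Fq f ft ftd hft hftd s b α β hne hα hβ
end

section
/- Let k be a field of characteristic 2 and let f(T) = T^{12} + T^3 ∈ k[T]. Then the polynomial x − y divides both f̃(x,y) − f'(x) and \widetilde{f'}(x,y) in k[x,y], and every common non-unit factor of f̃(x,y) − f'(x) and \widetilde{f'}(x,y) in k[x,y] is an associate of x − y; in particular these two polynomials have no common non-unit factor except powers of x − y. -/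
/-! Taylor expansion of `f` at `x` gives `f(y) = f(x) + (y - x) f'(x) + (y - x)² c`, so cancelling
`x - y` yields `f̃(x, y) = f'(x) - (x - y) c`, for every `f`. In characteristic `2`,
`f' = 12 T¹¹ + 3 T² = T²`, so `f̃' = x + y = x - y`, which is prime in `k[x, y]`; its non-unit
divisors are its associates. -/

open Polynomial

theorem Polynomial.sub_dvd_sub_aeval_derivative_of_mul_eq {R A : Type*} [CommRing R] [CommRing A]
    [IsDomain A] [Algebra R A] (f : R[X]) {a b q : A} (hab : a ≠ b)
    (hq : (a - b) * q = aeval a f - aeval b f) :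
    a - b ∣ q - aeval a (derivative f) := by
  obtain ⟨c, hc⟩ := binomExpansion (f.map (algebraMap R A)) a (b - a)
  simp only [add_sub_cancel, eval_map_algebraMap, derivative_map] at hc
  refine ⟨-c, mul_left_cancel₀ (sub_ne_zero.mpr hab) ?_⟩
  rw [mul_sub, hq, hc]
  ring

theorem eq_sub_of_mul_eq_sq_sub_sq {A : Type*} [CommRing A] [IsDomain A] [CharP A 2]
    {a b q : A} (hab : a ≠ b) (hq : (a - b) * q = a ^ 2 - b ^ 2) : q = a - b := by
  refine mul_left_cancel₀ (sub_ne_zero.mpr hab) ?_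
  rw [hq]
  linear_combination (a * b - b ^ 2) * CharTwo.two_eq_zero (R := A)

theorem derivative_X_pow_twelve_add_X_pow_three {R : Type*} [CommSemiring R] [CharP R 2] :
    derivative (X ^ 12 + X ^ 3 : R[X]) = X ^ 2 := by
  have h12 : ((12 : ℕ) : R) = 0 := (CharP.cast_eq_zero_iff R 2 12).mpr (by norm_num)
  have h3 : ((3 : ℕ) : R) = 1 := by
    rw [show (3 : ℕ) = 2 + 1 from rfl, Nat.cast_add, CharP.cast_eq_zero, Nat.cast_one, zero_add]
  simp only [map_add, derivative_X_pow, h12, h3, map_zero, map_one, zero_mul, one_mul, zero_add]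

theorem MvPolynomial.prime_X_zero_sub_X_succ {R : Type*} [CommRing R] [IsDomain R] {n : ℕ}
    (j : Fin n) : Prime (X 0 - X j.succ : MvPolynomial (Fin (n + 1)) R) := by
  rw [← MulEquiv.prime_iff (finSuccEquiv R n).toMulEquiv]
  convert Polynomial.prime_X_sub_C (X j : MvPolynomial (Fin n) R)
  simp [finSuccEquiv_X_zero, finSuccEquiv_X_succ]

theorem stmt14 (k : Type) [Field k] [CharP k 2]
    (ft ftd : MvPolynomial (Fin 2) k)
    (hft : (MvPolynomial.X 0 - MvPolynomial.X 1) * ft =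
      Polynomial.aeval (MvPolynomial.X 0) (Polynomial.X ^ 12 + Polynomial.X ^ 3 : Polynomial k) -
        Polynomial.aeval (MvPolynomial.X 1)
          (Polynomial.X ^ 12 + Polynomial.X ^ 3 : Polynomial k))
    (hftd : (MvPolynomial.X 0 - MvPolynomial.X 1) * ftd =
      Polynomial.aeval (MvPolynomial.X 0)
          (Polynomial.derivative (Polynomial.X ^ 12 + Polynomial.X ^ 3 : Polynomial k)) -
        Polynomial.aeval (MvPolynomial.X 1)
          (Polynomial.derivative (Polynomial.X ^ 12 + Polynomial.X ^ 3 : Polynomial k))) :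
    (MvPolynomial.X 0 - MvPolynomial.X 1) ∣
      (ft - Polynomial.aeval (MvPolynomial.X 0)
        (Polynomial.derivative (Polynomial.X ^ 12 + Polynomial.X ^ 3 : Polynomial k))) ∧
    (MvPolynomial.X 0 - MvPolynomial.X 1) ∣ ftd ∧
    (∀ p : MvPolynomial (Fin 2) k, ¬ IsUnit p →
      p ∣ (ft - Polynomial.aeval (MvPolynomial.X 0)
        (Polynomial.derivative (Polynomial.X ^ 12 + Polynomial.X ^ 3 : Polynomial k))) →
      p ∣ ftd →
      Associated p (MvPolynomial.X 0 - MvPolynomial.X 1)) ∧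
    (∀ p : MvPolynomial (Fin 2) k, ¬ IsUnit p →
      p ∣ (ft - Polynomial.aeval (MvPolynomial.X 0)
        (Polynomial.derivative (Polynomial.X ^ 12 + Polynomial.X ^ 3 : Polynomial k))) →
      p ∣ ftd →
      ∃ n : ℕ, Associated p ((MvPolynomial.X 0 - MvPolynomial.X 1) ^ n)) := by
  have hne : (MvPolynomial.X 0 : MvPolynomial (Fin 2) k) ≠ MvPolynomial.X 1 :=
    (MvPolynomial.X_injective (σ := Fin 2) (R := k)).ne (by decide)
  have hprime : Prime (MvPolynomial.X 0 - MvPolynomial.X 1 : MvPolynomial (Fin 2) k) :=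
    MvPolynomial.prime_X_zero_sub_X_succ 0
  have hftd_eq : ftd = MvPolynomial.X 0 - MvPolynomial.X 1 := by
    rw [derivative_X_pow_twelve_add_X_pow_three] at hftd
    simp only [map_pow, aeval_X] at hftd
    exact eq_sub_of_mul_eq_sq_sub_sq hne hftd
  have hassoc : ∀ p : MvPolynomial (Fin 2) k, ¬ IsUnit p → p ∣ ftd →
      Associated p (MvPolynomial.X 0 - MvPolynomial.X 1) := fun p hp hdvd =>
    ((hprime.irreducible.dvd_iff.mp (hftd_eq ▸ hdvd)).resolve_left hp).symm
  refine ⟨sub_dvd_sub_aeval_derivative_of_mul_eq _ hne hft, hftd_eq ▸ dvd_rfl,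
    fun p hp _ hdvd => hassoc p hp hdvd, fun p hp _ hdvd => ⟨1, ?_⟩⟩
  rw [pow_one]
  exact hassoc p hp hdvd
end

section
/- Let k be a field of characteristic 2 and let f(T) = T^7 ∈ k[T]. Then the polynomial x² + xy + y² is a common factor of f̃(x,y) − f'(x) and \widetilde{f'}(x,y) in k[x,y], and x² + xy + y² is not an associate of any power of x − y; in particular, f̃(x,y) − f'(x) and \widetilde{f'}(x,y) have a common non-unit factor that is not a power of x − y. -/
open Polynomial
open scoped Classical

noncomputable section

/-!
For `f = T ^ 7` in characteristic 2 we have `f' = 7 T ^ 6 = T ^ 6`, and with `q = x² + xy + y²`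
the identity `(x - y) q = x³ - y³` (valid because `2 = 0`) gives the explicit factorizations
`f̃ - f'(x) = y (x - y) q²` and `f̃' = (x - y) q²`. That `q` is not associated to `(x - y) ^ n` is
seen by evaluating: at `(1, 1)` the polynomial `q` becomes `3 = 1` while `x - y` vanishes, which
forces `n = 0`, and at `(0, 0)` the polynomial `q` vanishes, so it is not a unit.
-/

theorem aeval_derivative_X_pow {R A : Type*} [CommSemiring R] [Semiring A] [Algebra R A]
    (n : ℕ) (a : A) : aeval a (derivative (X ^ n : R[X])) = n * a ^ (n - 1) := by
  rw [derivative_X_pow, map_mul, aeval_C, map_natCast, aeval_X_pow]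

section CharTwo

variable {R : Type*} [CommRing R] [CharP R 2]

theorem pow_seven_sub_pow_seven_of_charTwo (x y : R) :
    x ^ 7 - y ^ 7 = (x - y) * (7 * x ^ 6 + y * (x - y) * (x ^ 2 + x * y + y ^ 2) ^ 2) := by
  linear_combination
    (-3 * x ^ 7 - y ^ 7 + 3 * x ^ 6 * y + x ^ 3 * y ^ 4) * CharTwo.two_eq_zero (R := R)

theorem seven_mul_pow_six_sub_of_charTwo (x y : R) :
    7 * x ^ 6 - 7 * y ^ 6 = (x - y) * ((x - y) * (x ^ 2 + x * y + y ^ 2) ^ 2) := by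
  linear_combination (3 * x ^ 6 - 4 * y ^ 6 + x ^ 3 * y ^ 3) * CharTwo.two_eq_zero (R := R)

theorem MvPolynomial.not_associated_sq_add_mul_add_sq_sub_pow_of_charTwo (n : ℕ) :
    ¬ Associated
      (MvPolynomial.X 0 ^ 2 + MvPolynomial.X 0 * MvPolynomial.X 1 + MvPolynomial.X 1 ^ 2 :
        MvPolynomial (Fin 2) R)
      ((MvPolynomial.X 0 - MvPolynomial.X 1) ^ n) := by
  have : Nontrivial R := CharP.nontrivial_of_char_ne_one (v := 2) (by norm_num)
  intro h
  rcases n with _ | n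
  · have at_zero := h.map (MvPolynomial.eval fun _ => (0 : R))
    simp at at_zero
  · have at_one := h.map (MvPolynomial.eval fun _ => (1 : R))
    have three_eq_one : (1 + 1 + 1 : R) = 1 := by
      linear_combination CharTwo.two_eq_zero (R := R)
    simp [three_eq_one] at at_one

end CharTwo

theorem stmt15 (k : Type) [Field k] [CharP k 2]
    (ft ftd : MvPolynomial (Fin 2) k)
    (hft : (MvPolynomial.X 0 - MvPolynomial.X 1) * ft =
      Polynomial.aeval (MvPolynomial.X 0) (Polynomial.X ^ 7 : Polynomial k) -
        Polynomial.aeval (MvPolynomial.X 1) (Polynomial.X ^ 7 : Polynomial k))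
    (hftd : (MvPolynomial.X 0 - MvPolynomial.X 1) * ftd =
      Polynomial.aeval (MvPolynomial.X 0)
          (Polynomial.derivative (Polynomial.X ^ 7 : Polynomial k)) -
        Polynomial.aeval (MvPolynomial.X 1)
          (Polynomial.derivative (Polynomial.X ^ 7 : Polynomial k))) :
    (MvPolynomial.X 0 ^ 2 + MvPolynomial.X 0 * MvPolynomial.X 1 + MvPolynomial.X 1 ^ 2 :
        MvPolynomial (Fin 2) k) ∣
      (ft - Polynomial.aeval (MvPolynomial.X 0)
        (Polynomial.derivative (Polynomial.X ^ 7 : Polynomial k))) ∧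
    (MvPolynomial.X 0 ^ 2 + MvPolynomial.X 0 * MvPolynomial.X 1 + MvPolynomial.X 1 ^ 2 :
        MvPolynomial (Fin 2) k) ∣ ftd ∧
    (∀ n : ℕ, ¬ Associated
      (MvPolynomial.X 0 ^ 2 + MvPolynomial.X 0 * MvPolynomial.X 1 + MvPolynomial.X 1 ^ 2 :
        MvPolynomial (Fin 2) k)
      ((MvPolynomial.X 0 - MvPolynomial.X 1) ^ n)) ∧
    (∃ p : MvPolynomial (Fin 2) k, ¬ IsUnit p ∧
      p ∣ (ft - Polynomial.aeval (MvPolynomial.X 0)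
        (Polynomial.derivative (Polynomial.X ^ 7 : Polynomial k))) ∧
      p ∣ ftd ∧
      ∀ n : ℕ, ¬ Associated p ((MvPolynomial.X 0 - MvPolynomial.X 1) ^ n)) := by
  set x : MvPolynomial (Fin 2) k := MvPolynomial.X 0
  set y : MvPolynomial (Fin 2) k := MvPolynomial.X 1
  set q := x ^ 2 + x * y + y ^ 2
  have hxy : x - y ≠ 0 := sub_ne_zero.mpr <| (MvPolynomial.X_injective (σ := Fin 2) (R := k)).ne
    (by decide)
  simp only [aeval_X_pow, aeval_derivative_X_pow, Nat.cast_ofNat, Nat.add_one_sub_one]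
    at hft hftd ⊢
  have dvd_ft : q ∣ ft - 7 * x ^ 6 := ⟨y * (x - y) * q, mul_left_cancel₀ hxy <| by
    rw [mul_sub, hft, pow_seven_sub_pow_seven_of_charTwo]; ring⟩
  have dvd_ftd : q ∣ ftd := ⟨(x - y) * q, mul_left_cancel₀ hxy <| by
    rw [hftd, seven_mul_pow_six_sub_of_charTwo]; ring⟩
  have not_assoc := MvPolynomial.not_associated_sq_add_mul_add_sq_sub_pow_of_charTwo (R := k)
  have not_unit : ¬ IsUnit q := fun hq => not_assoc 0 (by simpa using hq)
  exact ⟨dvd_ft, dvd_ftd, not_assoc, q, not_unit, dvd_ft, dvd_ftd, not_assoc⟩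
end
end
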